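/- Assume A is a local ring with maximal ideal M and that f^{-1}(Q) ≠ M for every prime ideal Q of B not containing J. If I is an ideal of A whose radical is M, then the radical of the extension I·(A⋈^f J) equals M⋈^f J := {(m, f(m)+j) : m ∈ M, j ∈ J}. -/
import Mathlib


section Amalgamation

variable {A B : Type*} [CommRing A] [CommRing B]

/-- The amalgamation `A ⋈^f J` of `A` with `B` along the ideal `J` of `B` with respect to
the ring homomorphism `f : A → B`, realized as the subring
`{(a, f a + j) | a ∈ A, j ∈ J}` of `A × B`. -/
def amalg (f : A →+* B) (J : Ideal B) : Subring (A × B) where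
  carrier := {x : A × B | x.2 - f x.1 ∈ J}
  zero_mem' := by simp
  one_mem' := by simp
  add_mem' := by
    intro x y hx hy
    simp only [Set.mem_setOf_eq, Prod.fst_add, Prod.snd_add, map_add] at *
    have h : x.2 + y.2 - (f x.1 + f y.1) = x.2 - f x.1 + (y.2 - f y.1) := by ring
    rw [h]; exact J.add_mem hx hy
  neg_mem' := by
    intro x hx
    simp only [Set.mem_setOf_eq, Prod.fst_neg, Prod.snd_neg, map_neg] at *
    have h : -x.2 - -f x.1 = -(x.2 - f x.1) := by ring
    rw [h]; exact J.neg_mem hx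
  mul_mem' := by
    intro x y hx hy
    simp only [Set.mem_setOf_eq, Prod.fst_mul, Prod.snd_mul, map_mul] at *
    have h : x.2 * y.2 - f x.1 * f y.1 = x.2 * (y.2 - f y.1) + (x.2 - f x.1) * f y.1 := by ring
    rw [h]
    exact J.add_mem (J.mul_mem_left _ hy) (J.mul_mem_right _ hx)

lemma mem_amalg_iff (f : A →+* B) (J : Ideal B) (x : A × B) :
    x ∈ amalg f J ↔ x.2 - f x.1 ∈ J := Iff.rfl

/-- The canonical embedding `ι : A → A ⋈^f J`, `a ↦ (a, f a)`. -/
def iota (f : A →+* B) (J : Ideal B) : A →+* amalg f J :=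
  ((RingHom.id A).prod f).codRestrict (amalg f J) (fun a => by
    simp [mem_amalg_iff])

/-- The natural projection `p_A : A ⋈^f J → A`. -/
def pA (f : A →+* B) (J : Ideal B) : amalg f J →+* A :=
  (RingHom.fst A B).comp (amalg f J).subtype

/-- The natural projection `p_B : A ⋈^f J → B`. -/
def pB (f : A →+* B) (J : Ideal B) : amalg f J →+* B :=
  (RingHom.snd A B).comp (amalg f J).subtype

/-- For an ideal `P` of `A`, the ideal `P'^f = P ⋈^f J = {(p, f p + j) | p ∈ P, j ∈ J}`
of `A ⋈^f J`. -/
def idealPf (f : A →+* B) (J : Ideal B) (P : Ideal A) : Ideal (amalg f J) :=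
  Submodule.copy (Ideal.comap (pA f J) P)
    {x : amalg f J | ∃ p ∈ P, ∃ j ∈ J, (x : A × B) = (p, f p + j)}
    (by
      ext x
      simp only [Set.mem_setOf_eq, SetLike.mem_coe, Ideal.mem_comap]
      constructor
      · rintro ⟨p, hp, j, hj, hx⟩
        have h1 : pA f J x = p := by
          show (x : A × B).1 = p
          rw [hx]
        rw [h1]; exact hp
      · intro hx
        refine ⟨(x : A × B).1, hx, (x : A × B).2 - f (x : A × B).1,
          (mem_amalg_iff f J _).mp x.2, ?_⟩
        ext <;> simp)

end Amalgamation
section AmalgAux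
variable {A B : Type*} [CommRing A] [CommRing B] (f : A →+* B) (J : Ideal B)

/-- The element `(0, b)` of the amalgamation, for `b ∈ J`. -/
def zE (b : B) (hb : b ∈ J) : amalg f J :=
  ⟨(0, b), by simpa [mem_amalg_iff] using hb⟩

lemma zE_congr {b c : B} (hb : b ∈ J) (hc : c ∈ J) (h : b = c) :
    zE f J b hb = zE f J c hc := by subst h; rfl

lemma zE_add {b c d : B} (hb : b ∈ J) (hc : c ∈ J) (hd : d ∈ J) (h : b = c + d) :
    zE f J b hb = zE f J c hc + zE f J d hd :=
  Subtype.ext (by simp [zE, h, Prod.ext_iff])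

lemma zE_mul {b c d : B} (hb : b ∈ J) (hc : c ∈ J) (hd : d ∈ J) (h : b = c * d) :
    zE f J b hb = zE f J c hc * zE f J d hd :=
  Subtype.ext (by simp [zE, h, Prod.ext_iff])

lemma zE_pow {b c : B} (hb : b ∈ J) (hc : c ∈ J) {n : ℕ} (h : c = b ^ (n + 1)) :
    zE f J c hc = zE f J b hb ^ (n + 1) :=
  Subtype.ext (by
    push_cast
    simp [zE, h, Prod.ext_iff, Prod.pow_fst, Prod.pow_snd, zero_pow])

lemma coe_iota (a : A) : ((iota f J a : amalg f J) : A × B) = (a, f a) := rfl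

lemma iota_mul_zE (a : A) {b c : B} (hb : b ∈ J) (hc : c ∈ J) (h : c = f a * b) :
    zE f J c hc = iota f J a * zE f J b hb :=
  Subtype.ext (by simp [zE, h, Prod.ext_iff, coe_iota])

end AmalgAux

section AmalgQ
variable {A B : Type*} [CommRing A] [CommRing B] (f : A →+* B) (J : Ideal B)
variable (P : Ideal (amalg f J)) {j : B} (hjJ : j ∈ J)

/-- The auxiliary ideal `{b ∈ B | ∃ n, (0, b·jⁿ⁺¹) ∈ P}` of `B`. -/
def Qdef : Ideal B where
  carrier := {b | ∃ n : ℕ, zE f J (b * j ^ n * j) (J.mul_mem_left _ hjJ) ∈ P}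
  zero_mem' := ⟨0, by
    have h0 : zE f J ((0 : B) * j ^ 0 * j) (J.mul_mem_left _ hjJ) = 0 :=
      Subtype.ext (by simp [zE, Prod.ext_iff])
    rw [h0]; exact P.zero_mem⟩
  add_mem' := by
    rintro b c ⟨n, hn⟩ ⟨m, hm⟩
    have bump : ∀ (d : B) (r : ℕ),
        zE f J (d * j ^ r * j) (J.mul_mem_left _ hjJ) ∈ P →
        ∀ k, zE f J (d * j ^ (r + k) * j) (J.mul_mem_left _ hjJ) ∈ P := by
      intro d r h k
      induction k with
      | zero => simpa using h
      | succ k ih =>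
        have heq : zE f J (d * j ^ (r + (k + 1)) * j) (J.mul_mem_left _ hjJ) =
            zE f J j hjJ * zE f J (d * j ^ (r + k) * j) (J.mul_mem_left _ hjJ) :=
          zE_mul f J _ _ _ (by ring)
        rw [heq]; exact P.mul_mem_left _ ih
    refine ⟨n + m, ?_⟩
    have h1 := bump b n hn m
    have h2 := bump c m hm n
    have h2' : zE f J (c * j ^ (n + m) * j) (J.mul_mem_left _ hjJ) ∈ P := by
      have := zE_congr f J (J.mul_mem_left (c * j ^ (m + n)) hjJ)
        (J.mul_mem_left (c * j ^ (n + m)) hjJ) (by ring)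
      rwa [this] at h2
    have heq : zE f J ((b + c) * j ^ (n + m) * j) (J.mul_mem_left _ hjJ) =
        zE f J (b * j ^ (n + m) * j) (J.mul_mem_left _ hjJ) +
        zE f J (c * j ^ (n + m) * j) (J.mul_mem_left _ hjJ) :=
      zE_add f J _ _ _ (by ring)
    rw [heq]; exact P.add_mem h1 h2'
  smul_mem' := by
    rintro c b ⟨n, hn⟩
    refine ⟨n + 1, ?_⟩
    have heq : zE f J (c • b * j ^ (n + 1) * j) (J.mul_mem_left _ hjJ) =
        zE f J (c * j) (J.mul_mem_left _ hjJ) * zE f J (b * j ^ n * j) (J.mul_mem_left _ hjJ) :=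
      zE_mul f J _ _ _ (by simp [smul_eq_mul]; ring)
    rw [heq]; exact P.mul_mem_left _ hn

variable {P}

lemma Qdef_bump {b : B} {n : ℕ}
    (h : zE f J (b * j ^ n * j) (J.mul_mem_left _ hjJ) ∈ P) (k : ℕ) :
    zE f J (b * j ^ (n + k) * j) (J.mul_mem_left _ hjJ) ∈ P := by
  induction k with
  | zero => simpa using h
  | succ k ih =>
    have heq : zE f J (b * j ^ (n + (k + 1)) * j) (J.mul_mem_left _ hjJ) =
        zE f J j hjJ * zE f J (b * j ^ (n + k) * j) (J.mul_mem_left _ hjJ) :=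
      zE_mul f J _ _ _ (by ring)
    rw [heq]; exact P.mul_mem_left _ ih

lemma Qdef_isPrime (hP : P.IsPrime) (hz : zE f J j hjJ ∉ P) :
    (Qdef f J P hjJ).IsPrime := by
  constructor
  · intro htop
    have h1 : (1 : B) ∈ Qdef f J P hjJ := htop ▸ Submodule.mem_top
    obtain ⟨n, hn⟩ := h1
    have heq : zE f J ((1 : B) * j ^ n * j) (J.mul_mem_left _ hjJ) =
        zE f J j hjJ ^ (n + 1) := zE_pow f J _ _ (by ring)
    rw [heq] at hn
    exact hz (hP.mem_of_pow_mem _ hn)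
  · rintro b c ⟨n, hn⟩
    have hn1 : zE f J (b * c * j ^ (n + 1) * j) (J.mul_mem_left _ hjJ) ∈ P := by
      have := Qdef_bump f J hjJ hn 1
      exact this
    have heq : zE f J (b * c * j ^ (n + 1) * j) (J.mul_mem_left _ hjJ) =
        zE f J (b * j) (J.mul_mem_left _ hjJ) * zE f J (c * j ^ n * j) (J.mul_mem_left _ hjJ) :=
      zE_mul f J _ _ _ (by ring)
    rw [heq] at hn1
    rcases hP.mem_or_mem hn1 with h | h
    · left
      refine ⟨0, ?_⟩
      have heq2 : zE f J (b * j ^ 0 * j) (J.mul_mem_left _ hjJ) =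
          zE f J (b * j) (J.mul_mem_left _ hjJ) := zE_congr f J _ _ (by ring)
      rw [heq2]; exact h
    · exact Or.inr ⟨n, h⟩

lemma J_not_le_Qdef (hP : P.IsPrime) (hz : zE f J j hjJ ∉ P) :
    ¬ J ≤ Qdef f J P hjJ := by
  intro hle
  obtain ⟨n, hn⟩ := hle hjJ
  have heq : zE f J (j * j ^ n * j) (J.mul_mem_left _ hjJ) =
      zE f J j hjJ ^ (n + 1 + 1) := zE_pow f J _ _ (by ring)
  rw [heq] at hn
  exact hz (hP.mem_of_pow_mem _ hn)

lemma mem_Qdef_of_iota {a : A} (ha : iota f J a ∈ P) : f a ∈ Qdef f J P hjJ := by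
  refine ⟨0, ?_⟩
  have heq : zE f J (f a * j ^ 0 * j) (J.mul_mem_left _ hjJ) =
      iota f J a * zE f J j hjJ := iota_mul_zE f J a _ _ (by ring)
  rw [heq]
  exact Ideal.mul_mem_right _ _ ha

end AmalgQ

/-- If `A` is local with maximal ideal `M`, `f⁻¹(Q) ≠ M` for every prime `Q` of `B` not
containing `J`, and `I` is an ideal of `A` with radical `M`, then the radical of
`I·(A ⋈^f J)` is `M ⋈^f J`. -/
theorem stmt14 {A B : Type*} [CommRing A] [CommRing B] (f : A →+* B) (J : Ideal B)
    (M : Ideal A) (hM : M.IsMaximal) (hu : ∀ N : Ideal A, N.IsMaximal → N = M)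
    (hQ : ∀ Q : Ideal B, Q.IsPrime → ¬ J ≤ Q → Ideal.comap f Q ≠ M)
    (I : Ideal A) (hI : I.radical = M) :
    (Ideal.map (iota f J) I).radical = idealPf f J M := by
  have hcopy : idealPf f J M = Ideal.comap (pA f J) M := Submodule.copy_eq _ _ _
  rw [hcopy]
  haveI hMp : M.IsPrime := hM.isPrime
  have hcp : (Ideal.comap (pA f J) M).IsPrime := Ideal.IsPrime.comap _
  apply le_antisymm
  · rw [Ideal.IsPrime.radical_le_iff hcp, Ideal.map_le_iff_le_comap]
    intro a ha
    have : a ∈ M := by rw [← hI]; exact Ideal.le_radical ha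
    exact this
  · rw [Ideal.radical_eq_sInf]
    refine le_sInf ?_
    rintro P ⟨hle, hP⟩
    have hiM : ∀ m ∈ M, iota f J m ∈ P := by
      intro m hm
      have hm' : m ∈ I.radical := by rw [hI]; exact hm
      obtain ⟨k, hk⟩ := Ideal.mem_radical_iff.mp hm'
      have hk2 : iota f J m ^ k ∈ P := by
        apply hle
        rw [← map_pow]
        exact Ideal.mem_map_of_mem _ hk
      exact hP.mem_of_pow_mem k hk2
    intro x hx
    have hm : (x : A × B).1 ∈ M := hx
    have hjxJ : (x : A × B).2 - f (x : A × B).1 ∈ J := (mem_amalg_iff f J _).mp x.2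
    have hxeq : x = iota f J (x : A × B).1 + zE f J _ hjxJ :=
      Subtype.ext (by simp [zE, coe_iota, Prod.ext_iff])
    by_cases hz : zE f J _ hjxJ ∈ P
    · rw [hxeq]; exact P.add_mem (hiM _ hm) hz
    · exfalso
      apply hQ (Qdef f J P hjxJ) (Qdef_isPrime f J hjxJ hP hz) (J_not_le_Qdef f J hjxJ hP hz)
      apply le_antisymm
      · haveI hQp : (Qdef f J P hjxJ).IsPrime := Qdef_isPrime f J hjxJ hP hz
        have hne : Ideal.comap f (Qdef f J P hjxJ) ≠ ⊤ := (Ideal.IsPrime.comap f).ne_top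
        obtain ⟨N, hN, hleN⟩ := Ideal.exists_le_maximal _ hne
        rw [← hu N hN]
        exact hleN
      · intro m hm'
        exact mem_Qdef_of_iota f J hjxJ (hiM m hm')
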